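/- Let μ be a Borel probability measure on ℝ with finite second moment and variance σ² > 0. If ω ∈ ℂ⁺ satisfies Im ω > 2σ, then there exists z ∈ ℂ⁺ with Im z ≥ k(Im ω / σ)·σ such that F_μ(z) = ω, where k(t) = (t + √(t² − 4))/2. -/

import Mathlib

open MeasureTheory

noncomputable section

/-- The Stieltjes transform of a measure on `ℝ`. -/
def stT (μ : Measure ℝ) (z : ℂ) : ℂ := ∫ t, ((t : ℂ) - z)⁻¹ ∂μ

/-- The reciprocal Cauchy transform `F_μ = −1/m_μ`. -/
def Ffun (μ : Measure ℝ) (z : ℂ) : ℂ := -(stT μ z)⁻¹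

/-- `k(t) = (t + √(t² − 4))/2`. -/
def kfun (t : ℝ) : ℝ := (t + Real.sqrt (t ^ 2 - 4)) / 2

/-!
Write `u_z t = (t - z)⁻¹`, `m = m_μ(z)` and `m₁ = μ(1)`. Then `(t - z) (u_z t - m) = A - (t - m₁) m`
with `A = 1 + (z - m₁) m = ∫ (t - Re z) (u_z t - m) dμ`. Multiplying
`|t - z|² = (t - Re z)² + (Im z)²` by `|u_z t - m|²` and integrating, the left side is
`|A|² + σ² |m|²` and the first term on the right is at least `|A|²`, so `(Im z)² Var(u_z) ≤ σ² |m|²`.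
By Cauchy–Schwarz this yields `|F(z) - z + m₁| ≤ σ² / Im z`, and, as
`(F(z) - z) - (F(w) - w) = (z - w) Cov(u_z, u_w) / (m_z m_w)`, also
`|(F(z) - z) - (F(w) - w)| ≤ σ² |z - w| / (Im z Im w)`. Hence `v ↦ ω + v - F(v)` maps
`{c ≤ Im v}` into itself and contracts there as soon as `c + σ² / c ≤ Im ω` and `σ² < c²`.
The choice `c = k(Im ω / σ) σ` solves `c + σ² / c = Im ω`, and the Banach fixed point is the `z` sought.
-/

open ProbabilityTheory

section Moments

variable {α : Type*} [MeasurableSpace α] {μ : Measure α}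

theorem sq_norm_integral_mul_le {f g : α → ℂ} (hf : MemLp f 2 μ) (hg : MemLp g 2 μ) :
    ‖∫ a, f a * g a ∂μ‖ ^ 2 ≤ (∫ a, ‖f a‖ ^ 2 ∂μ) * ∫ a, ‖g a‖ ^ 2 ∂μ := by
  have holder := integral_mul_norm_le_Lp_mul_Lq (μ := μ) Real.HolderConjugate.two_two
    (by simpa using hf) (by simpa using hg)
  simp only [Real.rpow_two, ← Real.sqrt_eq_rpow] at holder
  calc ‖∫ a, f a * g a ∂μ‖ ^ 2 ≤ (∫ a, ‖f a‖ * ‖g a‖ ∂μ) ^ 2 := by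
        gcongr
        simpa only [norm_mul] using norm_integral_le_integral_norm (fun a => f a * g a)
    _ ≤ (√(∫ a, ‖f a‖ ^ 2 ∂μ) * √(∫ a, ‖g a‖ ^ 2 ∂μ)) ^ 2 :=
        pow_le_pow_left₀ (integral_nonneg fun a => by positivity) holder 2
    _ = (∫ a, ‖f a‖ ^ 2 ∂μ) * ∫ a, ‖g a‖ ^ 2 ∂μ := by
        rw [mul_pow, Real.sq_sqrt (integral_nonneg fun a => by positivity),
          Real.sq_sqrt (integral_nonneg fun a => by positivity)]

variable [IsProbabilityMeasure μ]

theorem integral_norm_sq_add_centered_mul {X : α → ℝ} (hX : MemLp X 2 μ) (a b : ℂ) :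
    ∫ ω, ‖a + ((X ω - μ[X] : ℝ) : ℂ) * b‖ ^ 2 ∂μ = ‖a‖ ^ 2 + Var[X; μ] * ‖b‖ ^ 2 := by
  have hY : MemLp (fun ω => X ω - μ[X]) 2 μ := hX.sub (memLp_const _)
  have hexpand : ∀ ω, ‖a + ((X ω - μ[X] : ℝ) : ℂ) * b‖ ^ 2 =
      ‖a‖ ^ 2 + (2 * (a.re * b.re + a.im * b.im) * (X ω - μ[X]) + ‖b‖ ^ 2 * (X ω - μ[X]) ^ 2) := by
    intro ω
    simp only [Complex.sq_norm, Complex.normSq_apply, Complex.add_re, Complex.add_im,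
      Complex.mul_re, Complex.mul_im, Complex.ofReal_re, Complex.ofReal_im]
    ring
  have hmean : ∫ ω, (X ω - μ[X]) ∂μ = 0 := by
    rw [integral_sub (hX.integrable one_le_two) (integrable_const _)]
    simp
  simp_rw [hexpand]
  rw [integral_add (integrable_const _)
      (((hY.integrable one_le_two).const_mul _).fun_add (hY.integrable_sq.const_mul _)),
    integral_add ((hY.integrable one_le_two).const_mul _) (hY.integrable_sq.const_mul _),
    integral_const_mul, integral_const_mul, hmean, variance_eq_integral hX.aemeasurable]
  simp [mul_comm]

theorem integral_sub_integral_mul_sub_integral {f g : α → ℂ} (hf : Integrable f μ)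
    (hg : Integrable g μ) (hfg : Integrable (fun a => f a * g a) μ) :
    ∫ a, (f a - ∫ b, f b ∂μ) * (g a - ∫ b, g b ∂μ) ∂μ
      = ∫ a, f a * g a ∂μ - (∫ a, f a ∂μ) * ∫ a, g a ∂μ := by
  have hexpand : ∀ a, (f a - ∫ b, f b ∂μ) * (g a - ∫ b, g b ∂μ)
      = f a * g a - ((∫ b, g b ∂μ) * f a + (∫ b, f b ∂μ) * g a
        - (∫ b, f b ∂μ) * ∫ b, g b ∂μ) := fun a => by ring
  have hlin : Integrable (fun a => (∫ b, g b ∂μ) * f a + (∫ b, f b ∂μ) * g a) μ :=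
    (hf.const_mul _).fun_add (hg.const_mul _)
  simp_rw [hexpand]
  rw [integral_sub hfg (hlin.sub' (integrable_const _)), integral_sub hlin (integrable_const _),
    integral_add (hf.const_mul _) (hg.const_mul _), integral_const_mul, integral_const_mul]
  simp only [integral_const, probReal_univ, one_smul]
  ring

end Moments

section Resolvent

variable {μ : Measure ℝ} {z w : ℂ}

theorem ofReal_sub_ne_zero_of_im_pos (hz : 0 < z.im) (t : ℝ) : (t : ℂ) - z ≠ 0 := by
  intro h
  simpa [hz.ne'] using congrArg Complex.im h

theorem norm_inv_ofReal_sub_le (hz : 0 < z.im) (t : ℝ) : ‖((t : ℂ) - z)⁻¹‖ ≤ z.im⁻¹ := by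
  rw [norm_inv]
  refine inv_anti₀ hz ?_
  simpa [abs_of_pos hz] using Complex.abs_im_le_norm ((t : ℂ) - z)

theorem continuous_inv_ofReal_sub (hz : 0 < z.im) : Continuous fun t : ℝ => ((t : ℂ) - z)⁻¹ :=
  (Complex.continuous_ofReal.sub continuous_const).inv₀ (ofReal_sub_ne_zero_of_im_pos hz)

theorem memLp_inv_ofReal_sub [IsFiniteMeasure μ] (hz : 0 < z.im) (p : ENNReal) :
    MemLp (fun t : ℝ => ((t : ℂ) - z)⁻¹) p μ :=
  .of_bound (continuous_inv_ofReal_sub hz).aestronglyMeasurable _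
    (ae_of_all _ (norm_inv_ofReal_sub_le hz))

theorem integrable_inv_ofReal_sub [IsFiniteMeasure μ] (hz : 0 < z.im) :
    Integrable (fun t : ℝ => ((t : ℂ) - z)⁻¹) μ :=
  memLp_one_iff_integrable.1 (memLp_inv_ofReal_sub hz 1)

theorem im_stT_pos [IsProbabilityMeasure μ] (hz : 0 < z.im) : 0 < (stT μ z).im := by
  have him : ∀ t : ℝ, (((t : ℂ) - z)⁻¹).im = z.im / Complex.normSq ((t : ℂ) - z) := by
    intro t
    simp [Complex.inv_im]
  have hpos : ∀ t : ℝ, 0 < z.im / Complex.normSq ((t : ℂ) - z) := fun t =>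
    div_pos hz (Complex.normSq_pos.2 (ofReal_sub_ne_zero_of_im_pos hz t))
  rw [stT, ← RCLike.im_to_complex, ← integral_im (integrable_inv_ofReal_sub hz)]
  simp only [RCLike.im_to_complex, him]
  refine (integral_pos_iff_support_of_nonneg (fun t => (hpos t).le) ?_).2 ?_
  · exact (integrable_inv_ofReal_sub hz).im.congr (ae_of_all _ him)
  · rw [Function.support_eq_univ fun t => (hpos t).ne']
    simp

theorem stT_ne_zero [IsProbabilityMeasure μ] (hz : 0 < z.im) : stT μ z ≠ 0 := fun h => by
  simpa [h] using im_stT_pos (μ := μ) hz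

theorem stT_sub_stT [IsFiniteMeasure μ] (hz : 0 < z.im) (hw : 0 < w.im) :
    stT μ z - stT μ w = (z - w) * ∫ t, ((t : ℂ) - z)⁻¹ * ((t : ℂ) - w)⁻¹ ∂μ := by
  rw [← integral_const_mul, stT, stT, ← integral_sub (integrable_inv_ofReal_sub hz)
    (integrable_inv_ofReal_sub hw)]
  refine integral_congr_ae (ae_of_all _ fun t => ?_)
  have := ofReal_sub_ne_zero_of_im_pos hz t
  have := ofReal_sub_ne_zero_of_im_pos hw t
  field_simp
  ring

theorem sq_norm_ofReal_sub_mul (t : ℝ) (z v : ℂ) :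
    ‖((t : ℂ) - z) * v‖ ^ 2 = ‖((t : ℂ) - z.re) * v‖ ^ 2 + z.im ^ 2 * ‖v‖ ^ 2 := by
  simp only [norm_mul, mul_pow, Complex.sq_norm, Complex.normSq_apply, Complex.sub_re,
    Complex.sub_im, Complex.ofReal_re, Complex.ofReal_im]
  ring

theorem integral_norm_sq_ofReal_sub_integral (hμ : MemLp id 2 μ) :
    ∫ t, ‖((t : ℂ) - (∫ s, s ∂μ : ℝ))‖ ^ 2 ∂μ = Var[id; μ] := by
  rw [variance_eq_integral hμ.aemeasurable]
  refine integral_congr_ae (ae_of_all _ fun t => ?_)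
  simp only [id, ← Complex.ofReal_sub, Complex.norm_real, Real.norm_eq_abs, sq_abs]

end Resolvent

section Variance

variable {μ : Measure ℝ} [IsProbabilityMeasure μ] {z w : ℂ}

theorem integral_ofReal_sub_mul_inv_sub_sub_stT (hμ : Integrable id μ) (hz : 0 < z.im) (c : ℂ) :
    ∫ t, ((t : ℂ) - c) * (((t : ℂ) - z)⁻¹ - stT μ z) ∂μ
      = 1 + (z - (∫ t, t ∂μ : ℝ)) * stT μ z := by
  have hexpand : ∀ t : ℝ, ((t : ℂ) - c) * (((t : ℂ) - z)⁻¹ - stT μ z)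
      = (1 + (z - c) * ((t : ℂ) - z)⁻¹) - ((t : ℂ) * stT μ z - c * stT μ z) := by
    intro t
    have := ofReal_sub_ne_zero_of_im_pos hz t
    field_simp
    ring
  have hu := integrable_inv_ofReal_sub (μ := μ) hz
  have ht : Integrable (fun t : ℝ => (t : ℂ) * stT μ z) μ := hμ.ofReal.mul_const _
  simp_rw [hexpand]
  rw [integral_sub ((integrable_const _).fun_add (hu.const_mul _)) (ht.sub' (integrable_const _)),
    integral_add (integrable_const _) (hu.const_mul _), integral_sub ht (integrable_const _),
    integral_const_mul, integral_mul_const, integral_complex_ofReal]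
  simp only [integral_const, probReal_univ, one_smul, stT]
  ring

theorem integral_norm_sq_sub_stT_le (hμ : MemLp id 2 μ) (hz : 0 < z.im) :
    ∫ t, ‖((t : ℂ) - z)⁻¹ - stT μ z‖ ^ 2 ∂μ ≤ Var[id; μ] * ‖stT μ z‖ ^ 2 / z.im ^ 2 := by
  set m := stT μ z
  set A := 1 + (z - (∫ t, t ∂μ : ℝ)) * m
  set v : ℝ → ℂ := fun t => ((t : ℂ) - z)⁻¹ - m
  have hv : MemLp v ⊤ μ := (memLp_inv_ofReal_sub hz ⊤).sub (memLp_const m)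
  have hdev : MemLp (fun t : ℝ => ((t : ℂ) - z.re) * v t) 2 μ :=
    hv.mul' (hμ.ofReal.sub (memLp_const _))
  have hv2 : Integrable (fun t => ‖v t‖ ^ 2) μ :=
    (memLp_two_iff_integrable_sq_norm hv.1).1 (hv.mono_exponent le_top)
  have hdev_sq : Integrable (fun t : ℝ => ‖((t : ℂ) - z.re) * v t‖ ^ 2) μ :=
    (memLp_two_iff_integrable_sq_norm hdev.1).1 hdev
  have hcentered : ∀ t : ℝ, ((t : ℂ) - z) * v t
      = A + ((t - ∫ s, id s ∂μ : ℝ) : ℂ) * -m := by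
    intro t
    have := ofReal_sub_ne_zero_of_im_pos hz t
    simp only [v, A, id, Complex.ofReal_sub]
    field_simp
    ring
  have htotal : ∫ t, ‖((t : ℂ) - z) * v t‖ ^ 2 ∂μ = ‖A‖ ^ 2 + Var[id; μ] * ‖m‖ ^ 2 := by
    simp_rw [hcentered]
    simpa using integral_norm_sq_add_centered_mul hμ A (-m)
  have hjensen : ‖A‖ ^ 2 ≤ ∫ t, ‖((t : ℂ) - z.re) * v t‖ ^ 2 ∂μ := by
    have hA : ∫ t, ((t : ℂ) - z.re) * v t ∂μ = A :=
      integral_ofReal_sub_mul_inv_sub_sub_stT (hμ.integrable one_le_two) hz z.re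
    rw [← hA]
    simpa using sq_norm_integral_mul_le hdev (memLp_const (1 : ℂ))
  simp only [sq_norm_ofReal_sub_mul _ z] at htotal
  rw [integral_add hdev_sq (hv2.const_mul _), integral_const_mul] at htotal
  rw [le_div_iff₀ (by positivity)]
  linarith

theorem norm_Ffun_sub_add_integral_le (hμ : MemLp id 2 μ) (hz : 0 < z.im) :
    ‖Ffun μ z - z + (∫ t, t ∂μ : ℝ)‖ ≤ Var[id; μ] / z.im := by
  set A := 1 + (z - (∫ t, t ∂μ : ℝ)) * stT μ z with hA_def
  have hm : stT μ z ≠ 0 := stT_ne_zero hz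
  have hrepr : Ffun μ z - z + (∫ t, t ∂μ : ℝ) = -(A / stT μ z) := by
    rw [Ffun, hA_def]
    field_simp
    ring
  have hA : ‖A‖ ^ 2 ≤ (Var[id; μ] * ‖stT μ z‖ / z.im) ^ 2 :=
    calc ‖A‖ ^ 2
        ≤ Var[id; μ] * ∫ t, ‖((t : ℂ) - z)⁻¹ - stT μ z‖ ^ 2 ∂μ := by
          rw [hA_def, ← integral_ofReal_sub_mul_inv_sub_sub_stT (hμ.integrable one_le_two) hz,
            ← integral_norm_sq_ofReal_sub_integral hμ]
          exact sq_norm_integral_mul_le (hμ.ofReal.sub (memLp_const _))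
            ((memLp_inv_ofReal_sub hz 2).sub (memLp_const _))
      _ ≤ Var[id; μ] * (Var[id; μ] * ‖stT μ z‖ ^ 2 / z.im ^ 2) :=
          mul_le_mul_of_nonneg_left (integral_norm_sq_sub_stT_le hμ hz) (variance_nonneg _ _)
      _ = (Var[id; μ] * ‖stT μ z‖ / z.im) ^ 2 := by ring
  rw [hrepr, norm_neg, norm_div, div_le_div_iff₀ (norm_pos_iff.2 hm) hz]
  have := (pow_le_pow_iff_left₀ (norm_nonneg _)
    (div_nonneg (mul_nonneg (variance_nonneg _ _) (norm_nonneg _)) hz.le) two_ne_zero).1 hA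
  rw [le_div_iff₀ hz] at this
  linarith

theorem norm_integral_mul_sub_stT_le (hμ : MemLp id 2 μ) (hz : 0 < z.im) (hw : 0 < w.im) :
    ‖∫ t, (((t : ℂ) - z)⁻¹ - stT μ z) * (((t : ℂ) - w)⁻¹ - stT μ w) ∂μ‖
      ≤ Var[id; μ] * ‖stT μ z‖ * ‖stT μ w‖ / (z.im * w.im) := by
  have hV := variance_nonneg id μ
  refine (pow_le_pow_iff_left₀ (norm_nonneg _) (by positivity) two_ne_zero).1 ?_
  calc _ ≤ (∫ t, ‖((t : ℂ) - z)⁻¹ - stT μ z‖ ^ 2 ∂μ) * ∫ t, ‖((t : ℂ) - w)⁻¹ - stT μ w‖ ^ 2 ∂μ :=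
        sq_norm_integral_mul_le ((memLp_inv_ofReal_sub hz 2).sub (memLp_const _))
          ((memLp_inv_ofReal_sub hw 2).sub (memLp_const _))
    _ ≤ (Var[id; μ] * ‖stT μ z‖ ^ 2 / z.im ^ 2) * (Var[id; μ] * ‖stT μ w‖ ^ 2 / w.im ^ 2) :=
        mul_le_mul (integral_norm_sq_sub_stT_le hμ hz) (integral_norm_sq_sub_stT_le hμ hw)
          (integral_nonneg fun _ => by positivity) (by positivity)
    _ = _ := by ring

theorem Ffun_sub_sub_Ffun_sub (hz : 0 < z.im) (hw : 0 < w.im) :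
    (Ffun μ z - z) - (Ffun μ w - w) = (z - w) *
      (∫ t, (((t : ℂ) - z)⁻¹ - stT μ z) * (((t : ℂ) - w)⁻¹ - stT μ w) ∂μ) / (stT μ z * stT μ w) := by
  have hzw : Integrable (fun t : ℝ => ((t : ℂ) - z)⁻¹ * ((t : ℂ) - w)⁻¹) μ :=
    memLp_one_iff_integrable.1 ((memLp_inv_ofReal_sub hw 1).mul' (memLp_inv_ofReal_sub hz ⊤))
  have hcov : ∫ t, (((t : ℂ) - z)⁻¹ - stT μ z) * (((t : ℂ) - w)⁻¹ - stT μ w) ∂μ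
      = (∫ t, ((t : ℂ) - z)⁻¹ * ((t : ℂ) - w)⁻¹ ∂μ) - stT μ z * stT μ w :=
    integral_sub_integral_mul_sub_integral (integrable_inv_ofReal_sub hz)
      (integrable_inv_ofReal_sub hw) hzw
  have hres := stT_sub_stT (μ := μ) hz hw
  have := stT_ne_zero (μ := μ) hz
  have := stT_ne_zero (μ := μ) hw
  rw [hcov, Ffun, Ffun]
  generalize (∫ t, ((t : ℂ) - z)⁻¹ * ((t : ℂ) - w)⁻¹ ∂μ) = K at hres ⊢
  field_simp
  linear_combination hres

theorem norm_Ffun_sub_sub_Ffun_sub_le (hμ : MemLp id 2 μ) (hz : 0 < z.im) (hw : 0 < w.im) :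
    ‖(Ffun μ z - z) - (Ffun μ w - w)‖ ≤ Var[id; μ] / (z.im * w.im) * ‖z - w‖ := by
  have hm : 0 < ‖stT μ z * stT μ w‖ :=
    norm_pos_iff.2 (mul_ne_zero (stT_ne_zero hz) (stT_ne_zero hw))
  rw [Ffun_sub_sub_Ffun_sub hz hw, norm_div, norm_mul, div_le_iff₀ hm]
  calc _ ≤ ‖z - w‖ * (Var[id; μ] * ‖stT μ z‖ * ‖stT μ w‖ / (z.im * w.im)) := by
        gcongr
        exact norm_integral_mul_sub_stT_le hμ hz hw
    _ = _ := by rw [norm_mul]; ring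

end Variance

theorem exists_Ffun_eq_of_add_div_le_im {μ : Measure ℝ} [IsProbabilityMeasure μ]
    (hμ : MemLp id 2 μ) {c : ℝ} (hc : 0 < c) (hVar : Var[id; μ] < c ^ 2) {ω : ℂ}
    (hω : c + Var[id; μ] / c ≤ ω.im) :
    ∃ z, c ≤ z.im ∧ Ffun μ z = ω := by
  set s : Set ℂ := {v | c ≤ v.im}
  set Φ : ℂ → ℂ := fun v => ω + v - Ffun μ v
  have hV := variance_nonneg id μ
  have him : ∀ v ∈ s, 0 < v.im := fun v hv => hc.trans_le hv
  have hmaps : Set.MapsTo Φ s s := by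
    intro v hv
    have hshift : (Ffun μ v - v).im ≤ Var[id; μ] / v.im :=
      calc (Ffun μ v - v).im = (Ffun μ v - v + (∫ t, t ∂μ : ℝ)).im := by simp
        _ ≤ ‖Ffun μ v - v + (∫ t, t ∂μ : ℝ)‖ := Complex.im_le_norm _
        _ ≤ Var[id; μ] / v.im := norm_Ffun_sub_add_integral_le hμ (him v hv)
    have hmono : Var[id; μ] / v.im ≤ Var[id; μ] / c := div_le_div_of_nonneg_left hV hc hv
    have hΦ_im : (Φ v).im = ω.im - (Ffun μ v - v).im := by simp [Φ]; ring
    show c ≤ (Φ v).im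
    linarith
  have hcontr : ContractingWith ⟨Var[id; μ] / c ^ 2, by positivity⟩ (hmaps.restrict Φ s s) := by
    refine ⟨(div_lt_one (by positivity)).2 hVar, LipschitzWith.of_dist_le_mul fun a b => ?_⟩
    simp only [Subtype.dist_eq, Set.MapsTo.val_restrict_apply, Complex.dist_eq]
    calc ‖Φ a - Φ b‖ = ‖(Ffun μ b - b) - (Ffun μ a - a)‖ := by congr 1; simp only [Φ]; ring
      _ ≤ Var[id; μ] / ((b : ℂ).im * (a : ℂ).im) * ‖(b : ℂ) - a‖ :=
        norm_Ffun_sub_sub_Ffun_sub_le hμ (him b b.2) (him a a.2)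
      _ ≤ Var[id; μ] / c ^ 2 * ‖(a : ℂ) - b‖ := by
        rw [norm_sub_rev, sq]
        gcongr
        · exact (him b b.2).le
        · exact b.2
        · exact a.2
  have hωs : ω ∈ s := show c ≤ ω.im by linarith [div_nonneg hV hc.le]
  obtain ⟨z, hzs, hfix, -⟩ :=
    hcontr.exists_fixedPoint' (isClosed_le continuous_const Complex.continuous_im).isComplete
      hmaps hωs (edist_ne_top _ _)
  exact ⟨z, hzs, by linear_combination -hfix.eq⟩

theorem kfun_add_inv {t : ℝ} (ht : 2 ≤ t) : kfun t + (kfun t)⁻¹ = t := by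
  have hr := Real.sq_sqrt (show 0 ≤ t ^ 2 - 4 by nlinarith)
  have hk : 0 < kfun t := by unfold kfun; positivity
  have hquad : kfun t ^ 2 - t * kfun t + 1 = 0 := by unfold kfun; linear_combination hr / 4
  field_simp
  linear_combination hquad

theorem one_lt_kfun {t : ℝ} (ht : 2 < t) : 1 < kfun t := by
  unfold kfun
  linarith [Real.sqrt_nonneg (t ^ 2 - 4)]

theorem statement_10 (μ : Measure ℝ) [IsProbabilityMeasure μ]
    (hint : Integrable (fun t : ℝ => t ^ 2) μ)
    (σ2 : ℝ) (hσ2 : σ2 = (∫ t, t ^ 2 ∂μ) - (∫ t, t ∂μ) ^ 2) (hσpos : 0 < σ2)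
    (ω : ℂ) (hω : 2 * Real.sqrt σ2 < ω.im) :
    ∃ z : ℂ, 0 < z.im ∧ kfun (ω.im / Real.sqrt σ2) * Real.sqrt σ2 ≤ z.im ∧ Ffun μ z = ω := by
  have hμ : MemLp id 2 μ := (memLp_two_iff_integrable_sq aestronglyMeasurable_id).2 hint
  set σ := √σ2
  have hσ : 0 < σ := Real.sqrt_pos.2 hσpos
  have hVar : Var[id; μ] = σ ^ 2 := by
    rw [Real.sq_sqrt hσpos.le, hσ2, variance_eq_sub hμ]
    rfl
  have ht : 2 < ω.im / σ := (lt_div_iff₀ hσ).2 hω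
  have hk := one_lt_kfun ht
  have hk_add_inv := kfun_add_inv ht.le
  set k := kfun (ω.im / σ)
  have hc : 0 < k * σ := by positivity
  have hc_sq : Var[id; μ] < (k * σ) ^ 2 := by
    rw [hVar, mul_pow]
    simpa using mul_lt_mul_of_pos_right (one_lt_pow₀ hk two_ne_zero) (pow_pos hσ 2)
  have hc_add : k * σ + Var[id; μ] / (k * σ) = ω.im := by
    rw [hVar, ← div_mul_cancel₀ ω.im hσ.ne', ← hk_add_inv]
    field_simp
  obtain ⟨z, hz, hFz⟩ := exists_Ffun_eq_of_add_div_le_im hμ hc hc_sq hc_add.le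
  exact ⟨z, hc.trans_le hz, hz, hFz⟩
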